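/- arXiv:1910.02111 — 5 statements merged into one kernel-verified Lean document; each statement's English description precedes it below -/
import Mathlib

section
/- Let R be a local unique factorization domain with maximal ideal m and fraction field K. Let x, y ∈ m with y an irreducible (prime) element of R. Then the polynomial T^3 + xT + y has no root in K; in particular, being of degree 3, it is irreducible over K. -/
open Polynomial

/-!
A root of `T^3 + xT + y` in `K` is integral over `R`, hence lies in `R` because a UFD is
integrally closed. A root `t ∈ R` would give `y = -t * (t^2 + x)`, and in the local ring `R`
both factors lie in `m` (if `t` were a unit then `t^2 = (t^2 + x) - x ∈ m`), contradicting the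
irreducibility of `y`. A cubic over a field without roots is irreducible.
-/

theorem IsLocalRing.cubic_ne_zero_of_irreducible {R : Type*} [CommRing R] [IsLocalRing R]
    {x y : R} (hx : x ∈ maximalIdeal R) (hy : Irreducible y) (t : R) :
    t ^ 3 + x * t + y ≠ 0 := by
  intro h
  have hfac : y = -t * (t ^ 2 + x) := by linear_combination h
  obtain ht | ht := hy.isUnit_or_isUnit hfac
  · have hsum : t ^ 2 + x ∈ maximalIdeal R := fun hu => hy.not_isUnit (hfac ▸ ht.mul hu)
    have hsq : t ^ 2 ∈ maximalIdeal R := by simpa using sub_mem hsum hx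
    exact (maximalIdeal.isMaximal R).isPrime.mem_of_pow_mem 2 hsq ((IsUnit.neg_iff t).mp ht)
  · have htm : t ∈ maximalIdeal R := fun hu => hy.not_isUnit (hfac ▸ hu.neg.mul ht)
    exact add_mem (Ideal.pow_mem_of_mem _ htm 2 two_pos) hx ht

theorem Polynomial.Monic.aeval_ne_zero_of_forall_eval_ne_zero {A K : Type*} [CommRing A]
    [IsDomain A] [IsIntegrallyClosed A] [Field K] [Algebra A K] [IsFractionRing A K]
    {p : A[X]} (hp : p.Monic) (h : ∀ t : A, p.eval t ≠ 0) (r : K) : aeval r p ≠ 0 := by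
  intro hr
  obtain ⟨t, rfl⟩ := IsIntegrallyClosed.isIntegral_iff.mp ⟨p, hp, hr⟩
  rw [aeval_algebraMap_apply_eq_algebraMap_eval,
    map_eq_zero_iff _ (IsFractionRing.injective A K)] at hr
  exact h t hr

theorem cubic_no_root_and_irreducible_of_local_UFD_general
    (R : Type*) [CommRing R] [IsDomain R] [UniqueFactorizationMonoid R] [IsLocalRing R]
    (x y : R) (hx : x ∈ IsLocalRing.maximalIdeal R)
    (hyirr : Irreducible y) :
    (∀ r : FractionRing R,
        r ^ 3 + algebraMap R (FractionRing R) x * r + algebraMap R (FractionRing R) y ≠ 0) ∧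
    Irreducible (X ^ 3 + C (algebraMap R (FractionRing R) x) * X
        + C (algebraMap R (FractionRing R) y)) := by
  have hmonic : (X ^ 3 + C x * X + C y : R[X]).Monic := by monicity!
  have hroot (r : FractionRing R) :
      r ^ 3 + algebraMap R _ x * r + algebraMap R _ y ≠ 0 := by
    simpa using hmonic.aeval_ne_zero_of_forall_eval_ne_zero
      (by simpa using IsLocalRing.cubic_ne_zero_of_irreducible hx hyirr) r
  refine ⟨hroot, irreducible_of_degree_le_three_of_not_isRoot ?_ fun r => by simpa using hroot r⟩
  convert (show 3 ∈ Finset.Icc 1 3 by decide)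
  compute_degree!

/-- Let `R` be a local UFD with maximal ideal `m` and fraction field `K`, and let
`x, y ∈ m` with `y` irreducible. Then `T^3 + x*T + y` has no root in `K`, and being of
degree 3 it is irreducible over `K`. -/
theorem cubic_no_root_and_irreducible_of_local_UFD
    (R : Type*) [CommRing R] [IsDomain R] [UniqueFactorizationMonoid R] [IsLocalRing R]
    (x y : R) (hx : x ∈ IsLocalRing.maximalIdeal R) (hy : y ∈ IsLocalRing.maximalIdeal R)
    (hyirr : Irreducible y) :
    (∀ r : FractionRing R,
        r ^ 3 + algebraMap R (FractionRing R) x * r + algebraMap R (FractionRing R) y ≠ 0) ∧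
    Irreducible (X ^ 3 + C (algebraMap R (FractionRing R) x) * X
        + C (algebraMap R (FractionRing R) y)) :=
  cubic_no_root_and_irreducible_of_local_UFD_general R x y hx hyirr
end

section
/- Let R be an integrally closed domain, L/K a finite Galois extension of its fraction field with group G, S the integral closure of R in L, p a prime of R, and q a prime of S lying over p such that q is the unique prime over p and the residue field extension κ(q)/κ(p) is separable. Then κ(q)/κ(p) is a (finite) Galois extension, and the natural map G → Aut(κ(q)/κ(p)) sending σ to the induced map on residue fields is a surjective group homomorphism. -/
/-!
Because `A` is integrally closed, `Gal(L/K)` acting on `B` through `galRestrict` is a Galois group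
of `B/A`: its invariants are exactly `A`. For such invariant extensions the residue extension
`Frac(B/q)/Frac(A/p)` is normal and the stabilizer of `q` surjects onto its automorphism group.
A separable normal extension with finite automorphism group is then finite Galois.
-/

theorem IsIntegralClosure.isGaloisGroup_of_isGalois (A K L B : Type*) [CommRing A] [IsDomain A]
    [IsIntegrallyClosed A] [CommRing B] [Algebra A B] [Field K] [Field L] [Algebra A K]
    [IsFractionRing A K] [Algebra B L] [Algebra K L] [Algebra A L] [IsScalarTower A B L]
    [IsScalarTower A K L] [IsIntegralClosure B A L] [FiniteDimensional K L] [IsGalois K L] :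
    letI := IsIntegralClosure.MulSemiringAction A K L B
    IsGaloisGroup Gal(L/K) A B :=
  letI := IsIntegralClosure.MulSemiringAction A K L B
  have := (IsIntegralClosure.algebraMap_injective B A L).isDomain
  have := IsIntegralClosure.isIntegral_algebra A (A := B) L
  have := IsIntegralClosure.isFractionRing_of_finite_extension A K L B
  .of_isFractionRing _ _ _ K L

theorem IsFractionRing.exists_galRestrict_quotient_eq {A B : Type*} (K L : Type*) [CommRing A]
    [IsDomain A] [IsIntegrallyClosed A] [CommRing B] [Algebra A B] [Field K] [Field L]
    [Algebra A K] [IsFractionRing A K] [Algebra B L] [Algebra K L] [Algebra A L]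
    [IsScalarTower A B L] [IsScalarTower A K L] [IsIntegralClosure B A L] [FiniteDimensional K L]
    [IsGalois K L] (P : Ideal A) (Q : Ideal B) [Q.IsPrime] [Q.LiesOver P]
    (k l : Type*) [Field k] [Field l] [Algebra (A ⧸ P) k] [IsFractionRing (A ⧸ P) k]
    [Algebra (B ⧸ Q) l] [IsFractionRing (B ⧸ Q) l] [Algebra (A ⧸ P) l]
    [IsScalarTower (A ⧸ P) (B ⧸ Q) l] [Algebra k l] [IsScalarTower (A ⧸ P) k l]
    (τ : l ≃ₐ[k] l) :
    ∃ σ : L ≃ₐ[K] L, ∀ b : B, τ (algebraMap (B ⧸ Q) l (Ideal.Quotient.mk Q b)) =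
      algebraMap (B ⧸ Q) l (Ideal.Quotient.mk Q (galRestrict A K L B σ b)) := by
  let := IsIntegralClosure.MulSemiringAction A K L B
  have := IsIntegralClosure.isGaloisGroup_of_isGalois A K L B
  obtain ⟨σ, rfl⟩ := IsFractionRing.stabilizerHom_surjective Gal(L/K) P Q k l τ
  exact ⟨σ, IsFractionRing.stabilizerHom_apply_apply_mk Gal(L/K) P Q k l σ⟩

theorem residue_extension_galois_and_surjective_of_unique_prime_over_general
    (A K L B : Type*) [CommRing A] [IsDomain A] [IsIntegrallyClosed A] [CommRing B]
    [Algebra A B] [Field K] [Field L] [Algebra A K] [IsFractionRing A K] [Algebra B L]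
    [Algebra K L] [Algebra A L] [IsScalarTower A B L] [IsScalarTower A K L]
    [IsIntegralClosure B A L] [FiniteDimensional K L] [IsGalois K L]
    (p : Ideal A) (hp : p.IsPrime) (q : Ideal B) (hq : q.IsPrime)
    (hover : q.comap (algebraMap A B) = p) :
    letI : Algebra (A ⧸ p) (B ⧸ q) :=
      (Ideal.quotientMap q (algebraMap A B) hover.ge).toAlgebra
    letI : FaithfulSMul (A ⧸ p) (B ⧸ q) :=
      (faithfulSMul_iff_algebraMap_injective _ _).mpr
        (Ideal.quotientMap_injective' (H := hover.ge) hover.le)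
    letI : Algebra (FractionRing (A ⧸ p)) (FractionRing (B ⧸ q)) :=
      FractionRing.liftAlgebra _ _
    Algebra.IsSeparable (FractionRing (A ⧸ p)) (FractionRing (B ⧸ q)) →
      FiniteDimensional (FractionRing (A ⧸ p)) (FractionRing (B ⧸ q)) ∧
      IsGalois (FractionRing (A ⧸ p)) (FractionRing (B ⧸ q)) ∧
      ∀ τ : FractionRing (B ⧸ q) ≃ₐ[FractionRing (A ⧸ p)] FractionRing (B ⧸ q),
        ∃ σ : L ≃ₐ[K] L, ∀ b : B,
          τ (algebraMap (B ⧸ q) (FractionRing (B ⧸ q)) (Ideal.Quotient.mk q b)) =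
            algebraMap (B ⧸ q) (FractionRing (B ⧸ q))
              (Ideal.Quotient.mk q (galRestrict A K L B σ b)) := by
  let : Algebra (A ⧸ p) (B ⧸ q) := (Ideal.quotientMap q (algebraMap A B) hover.ge).toAlgebra
  let : FaithfulSMul (A ⧸ p) (B ⧸ q) := (faithfulSMul_iff_algebraMap_injective _ _).mpr
    (Ideal.quotientMap_injective' (H := hover.ge) hover.le)
  let : Algebra (FractionRing (A ⧸ p)) (FractionRing (B ⧸ q)) := FractionRing.liftAlgebra _ _
  intro _
  have : q.LiesOver p := ⟨hover.symm⟩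
  have := FractionRing.isScalarTower_liftAlgebra (A ⧸ p) (FractionRing (B ⧸ q))
  -- The library's results use the `LiesOver` algebra structure on `B ⧸ q`, which has the same
  -- `algebraMap` as the one above but a different `smul`.
  have : @IsScalarTower (A ⧸ p) (B ⧸ q) (FractionRing (B ⧸ q))
      (Ideal.Quotient.algebraOfLiesOver q p).toSMul Algebra.toSMul Algebra.toSMul :=
    let : Algebra (A ⧸ p) (FractionRing (B ⧸ q)) := inferInstance
    let := Ideal.Quotient.algebraOfLiesOver q p
    .of_algebraMap_eq fun _ ↦ rfl
  let := IsIntegralClosure.MulSemiringAction A K L B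
  have := IsIntegralClosure.isGaloisGroup_of_isGalois A K L B
  exact ⟨Ideal.IsFractionRing.finite_of_isInvariant Gal(L/K) p q _ _,
    { __ := Ideal.IsFractionRing.normal Gal(L/K) p q
        (FractionRing (A ⧸ p)) (FractionRing (B ⧸ q)) },
    IsFractionRing.exists_galRestrict_quotient_eq K L p q _ _⟩

/-- Let `A` be an integrally closed domain, `L/K` a finite Galois extension of its
fraction field with group `G`, `B` the integral closure of `A` in `L`, and `q` a prime
of `B` which is the unique prime lying over a prime `p` of `A`, with separable residue
field extension `κ(q)/κ(p)`.  Then `κ(q)/κ(p)` is a finite Galois extension and the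
natural map `G → Aut(κ(q)/κ(p))` is surjective (every automorphism of `κ(q)` over
`κ(p)` is induced by some `σ ∈ G`). -/
theorem residue_extension_galois_and_surjective_of_unique_prime_over
    (A K L B : Type*) [CommRing A] [IsDomain A] [IsIntegrallyClosed A] [CommRing B]
    [Algebra A B] [Field K] [Field L] [Algebra A K] [IsFractionRing A K] [Algebra B L]
    [Algebra K L] [Algebra A L] [IsScalarTower A B L] [IsScalarTower A K L]
    [IsIntegralClosure B A L] [FiniteDimensional K L] [IsGalois K L]
    (p : Ideal A) (hp : p.IsPrime) (q : Ideal B) (hq : q.IsPrime)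
    (hover : q.comap (algebraMap A B) = p)
    (hunique : ∀ q' : Ideal B, q'.IsPrime → q'.comap (algebraMap A B) = p → q' = q) :
    letI : Algebra (A ⧸ p) (B ⧸ q) :=
      (Ideal.quotientMap q (algebraMap A B) hover.ge).toAlgebra
    letI : FaithfulSMul (A ⧸ p) (B ⧸ q) :=
      (faithfulSMul_iff_algebraMap_injective _ _).mpr
        (Ideal.quotientMap_injective' (H := hover.ge) hover.le)
    letI : Algebra (FractionRing (A ⧸ p)) (FractionRing (B ⧸ q)) :=
      FractionRing.liftAlgebra _ _
    Algebra.IsSeparable (FractionRing (A ⧸ p)) (FractionRing (B ⧸ q)) →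
      FiniteDimensional (FractionRing (A ⧸ p)) (FractionRing (B ⧸ q)) ∧
      IsGalois (FractionRing (A ⧸ p)) (FractionRing (B ⧸ q)) ∧
      ∀ τ : FractionRing (B ⧸ q) ≃ₐ[FractionRing (A ⧸ p)] FractionRing (B ⧸ q),
        ∃ σ : L ≃ₐ[K] L, ∀ b : B,
          τ (algebraMap (B ⧸ q) (FractionRing (B ⧸ q)) (Ideal.Quotient.mk q b)) =
            algebraMap (B ⧸ q) (FractionRing (B ⧸ q))
              (Ideal.Quotient.mk q (galRestrict A K L B σ b)) :=
  residue_extension_galois_and_surjective_of_unique_prime_over_general A K L B p hp q hq hover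
end

section
/- Let R be a commutative ring, S a commutative R-algebra that is finite and free (or finitely generated projective of constant rank r ≥ 1) as an R-module, and let I be an invertible R-module (i.e., a rank-one finitely generated projective R-module). If I ⊗_R S ≅ S as S-modules, then I^{⊗r} ≅ R as R-modules, where I^{⊗r} is the r-fold tensor power. In particular, if the class of I in Pic(R) is not torsion, then I ⊗_R S is not free over S. -/
open TensorProduct PiTensorProduct

/-!
A basis of `S` turns `S ⊗[R] I ≅ S` into an `R`-isomorphism `Φ : Iʳ ≅ Rʳ`. The map
`⨂ʳ I → R`, `v₁ ⊗ ⋯ ⊗ vᵣ ↦ det (Φ (vⱼ eⱼ))ⱼ` plays the role of `det Φ`. It is surjective: since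
`I` has rank one, `φ g • x = φ x • g` for `φ ∈ Iᵛ` and `g, x ∈ I`; hence `C * A = φ g • 1`, where
`A = (Φ (g eⱼ))ⱼ` and `C` records `φ` on preimages under `Φ` of the standard basis, so
`(φ g)ʳ = det C * det A` lies in the image, and these powers generate the unit ideal.
A surjection onto `R` from the invertible module `⨂ʳ I` is an isomorphism.
-/

namespace Module.Invertible

variable {R M : Type*} [CommSemiring R] [AddCommMonoid M] [Module R M] [Module.Invertible R M]

theorem apply_smul_comm (φ : Dual R M) (x y : M) : φ x • y = φ y • x := by
  have h := congr(TensorProduct.lid R M (φ.rTensor M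
    ($(tensorProductComm_eq_refl R M) (y ⊗ₜ[R] x))))
  simpa using h

variable (R M) in
theorem span_range_apply_eq_top :
    Ideal.span (Set.range fun p : Dual R M × M => p.1 p.2) = ⊤ := by
  refine (Ideal.eq_top_iff_one _).mpr ?_
  obtain ⟨z, hz⟩ := (Module.Invertible.bijective (R := R) (M := M)).2 1
  rw [← hz]
  clear hz
  induction z using TensorProduct.induction_on with
  | zero => simp
  | tmul φ x => exact Ideal.subset_span ⟨(φ, x), rfl⟩
  | add z z' hz hz' => rw [map_add]; exact add_mem hz hz'

instance tensorPower (n : ℕ) : Module.Invertible R (⨂[R]^n M) := by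
  induction n with
  | zero => exact .congr (isEmptyEquiv (Fin 0)).symm
  | succ n ih =>
    have : Module.Invertible R (⨂[R]^1 M) :=
      .congr (PiTensorProduct.subsingletonEquiv (s := fun _ : Fin 1 => M) 0).symm
    exact .congr TensorPower.mulEquiv

end Module.Invertible

noncomputable def Module.Basis.piLinearEquivOfBaseChange {R S M ι : Type*} [CommSemiring R]
    [Semiring S] [Algebra R S] [AddCommMonoid M] [Module R M] [Fintype ι] [DecidableEq ι]
    (b : Basis ι R S) (t : S ⊗[R] M ≃ₗ[S] S) : (ι → M) ≃ₗ[R] (ι → R) :=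
  (piScalarRight R R M ι).symm ≪≫ₗ TensorProduct.comm R M (ι → R) ≪≫ₗ
    TensorProduct.congr b.equivFun.symm (.refl R M) ≪≫ₗ t.restrictScalars R ≪≫ₗ b.equivFun

namespace PiTensorProduct

variable {R M ι : Type*} [CommRing R] [AddCommGroup M] [Module R M] [Fintype ι] [DecidableEq ι]

noncomputable def tensorDet (Φ : (ι → M) →ₗ[R] ι → R) : (⨂[R] _ : ι, M) →ₗ[R] R :=
  lift <| (Matrix.detRowAlternating (R := R) (n := ι)).toMultilinearMap.compLinearMap
    fun j => Φ ∘ₗ LinearMap.single R (fun _ => M) j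

theorem tensorDet_tprod (Φ : (ι → M) →ₗ[R] ι → R) (v : ι → M) :
    tensorDet Φ (tprod R v) = (Matrix.of fun j => Φ (Pi.single j (v j))).det := by
  rw [tensorDet, lift.tprod]
  rfl

variable [Module.Invertible R M]

theorem pow_card_mem_range_tensorDet {Φ : (ι → M) →ₗ[R] ι → R} (hΦ : Function.Surjective Φ)
    (φ : Module.Dual R M) (g : M) :
    φ g ^ Fintype.card ι ∈ LinearMap.range (tensorDet Φ) := by
  choose v hv using fun i => hΦ (Pi.single i 1)
  let C : Matrix ι ι R := Matrix.of fun i j => φ (v i j)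
  let A : Matrix ι ι R := Matrix.of fun j => Φ (Pi.single j g)
  have hCA : C * A = φ g • (1 : Matrix ι ι R) := by
    ext i k
    have h : φ g • v i = ∑ j, φ (v i j) • Pi.single j g := by
      ext l
      simp [Finset.sum_apply, Pi.single_apply, Module.Invertible.apply_smul_comm φ g]
    have := congr_fun (congrArg Φ h) k
    simp only [map_smul, map_sum, hv, Finset.sum_apply, Pi.smul_apply, smul_eq_mul] at this
    simp [C, A, Matrix.mul_apply, Matrix.one_apply, ← this, Pi.single_apply, eq_comm]
  have hdet : C.det * tensorDet Φ (tprod R fun _ => g) = φ g ^ Fintype.card ι := by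
    rw [tensorDet_tprod, ← Matrix.det_mul, hCA, Matrix.det_smul, Matrix.det_one, mul_one]
  exact ⟨C.det • tprod R fun _ => g, by rw [map_smul, smul_eq_mul, hdet]⟩

theorem tensorDet_surjective {Φ : (ι → M) →ₗ[R] ι → R} (hΦ : Function.Surjective Φ) :
    Function.Surjective (tensorDet Φ) := by
  rw [← LinearMap.range_eq_top, eq_top_iff,
    ← Ideal.span_pow_eq_top _ (Module.Invertible.span_range_apply_eq_top R M) (Fintype.card ι),
    Ideal.span_le]
  rintro _ ⟨_, ⟨⟨φ, g⟩, rfl⟩, rfl⟩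
  exact pow_card_mem_range_tensorDet hΦ φ g

end PiTensorProduct

theorem tensor_power_trivial_of_baseChange_free_general
    (R : Type*) [CommRing R] (S : Type*) [CommRing S] [Algebra R S]
    [Module.Free R S] [Module.Finite R S]
    (r : ℕ) (hrank : Module.finrank R S = r)
    (I : Type*) [AddCommGroup I] [Module R I]
    (J : Type*) [AddCommGroup J] [Module R J]
    (hinv : Nonempty ((I ⊗[R] J) ≃ₗ[R] R))
    (hfree : Nonempty ((S ⊗[R] I) ≃ₗ[S] S)) :
    Nonempty ((⨂[R]^r I) ≃ₗ[R] R) := by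
  rcases subsingleton_or_nontrivial R with _ | _
  · have : Subsingleton (⨂[R]^r I) := Module.subsingleton R _
    exact ⟨.ofSubsingleton _ _⟩
  obtain ⟨e⟩ := hinv
  obtain ⟨t⟩ := hfree
  have : Module.Invertible R I := .left e
  let Φ := (Module.finBasisOfFinrankEq R S hrank).piLinearEquivOfBaseChange t
  exact ⟨.ofBijective _ <| Module.Invertible.bijective_of_surjective <|
    tensorDet_surjective Φ.surjective⟩

/-- Let `S` be a finite free (rank `r ≥ 1`) algebra over `R`, and let `I` be an
invertible `R`-module (witnessed by an inverse `J` with `I ⊗ J ≅ R`).  If the base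
change of `I` to `S` is free, i.e. `S ⊗[R] I ≅ S` as `S`-modules, then `I^{⊗ r} ≅ R`.
In particular a nontorsion element of `Pic R` does not base change to a free module. -/
theorem tensor_power_trivial_of_baseChange_free
    (R : Type*) [CommRing R] (S : Type*) [CommRing S] [Algebra R S]
    [Module.Free R S] [Module.Finite R S]
    (r : ℕ) (hr : 1 ≤ r) (hrank : Module.finrank R S = r)
    (I : Type*) [AddCommGroup I] [Module R I]
    (J : Type*) [AddCommGroup J] [Module R J]
    (hinv : Nonempty ((I ⊗[R] J) ≃ₗ[R] R))
    (hfree : Nonempty ((S ⊗[R] I) ≃ₗ[S] S)) :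
    Nonempty ((⨂[R]^r I) ≃ₗ[R] R) :=
  tensor_power_trivial_of_baseChange_free_general R S r hrank I J hinv hfree
end

section
/- Let R be a commutative ring, a ∈ R, and n ≥ 1 an integer such that n is invertible in R. Then the R-algebra S = R[T]/(T^n − a) is étale over R after inverting a; that is, R[1/a] → S[1/a] is a finite étale (equivalently, finite, flat, and unramified) ring map. -/
universe v

open Polynomial

/-- The Kummer algebra `R[T]/(T^n - a)`. -/
noncomputable abbrev kummerAlg (R : Type*) [CommRing R] (a : R) (n : ℕ) : Type _ :=
  R[X] ⧸ Ideal.span {(X : R[X]) ^ n - C a}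

/-- The structure map `R → R[T]/(T^n - a)`. -/
noncomputable def kummerAlgMk (R : Type*) [CommRing R] (a : R) (n : ℕ) :
    R →+* kummerAlg R a n :=
  (Ideal.Quotient.mk (Ideal.span {(X : R[X]) ^ n - C a})).comp (C : R →+* R[X])

/-!
Since `t ^ n = a` in `S = R[T]/(T^n - a)`, inverting `a` is the same as inverting the root `t`,
and `S[1/t]` is the standard étale `R`-algebra of the pair `(T^n - a, T)`: the derivative
`n T^(n-1)` becomes a unit as soon as `T` does. So `S[1/a]` is étale over `R`, hence over the étale
`R`-algebra `R[1/a]`; it is finite over `R[1/a]` as the localization of the finite free `R`-module `S`.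
-/

theorem IsLocalization.Away.of_pow {R S : Type*} [CommSemiring R] [CommSemiring S] [Algebra R S]
    {x : R} {n : ℕ} (hn : n ≠ 0) [IsLocalization.Away (x ^ n) S] : IsLocalization.Away x S := by
  refine (IsLocalization.iff_of_le_of_exists_dvd (Submonoid.powers (x ^ n)) (Submonoid.powers x)
    (Submonoid.powers_le.mpr (pow_mem (Submonoid.mem_powers x) n)) ?_).mp ‹_›
  rintro _ ⟨k, rfl⟩
  refine ⟨(x ^ n) ^ k, ⟨k, rfl⟩, ?_⟩
  rw [← pow_mul]
  exact pow_dvd_pow x (Nat.le_mul_of_pos_left k (Nat.pos_of_ne_zero hn))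

theorem AdjoinRoot.root_X_pow_sub_C_pow {R : Type*} [CommRing R] (a : R) (n : ℕ) :
    root (X ^ n - C a) ^ n = of (X ^ n - C a) a := by
  rw [← sub_eq_zero, ← mk_X, ← mk_C, ← map_pow, ← map_sub, mk_self]

namespace StandardEtalePair

theorem etale_of_isLocalizationAway {R : Type*} [CommRing R] (P : StandardEtalePair R)
    (S : Type*) [CommRing S] [Algebra R S] [Algebra (AdjoinRoot P.f) S]
    [IsScalarTower R (AdjoinRoot P.f) S] [IsLocalization.Away (AdjoinRoot.mk P.f P.g) S] :
    Algebra.Etale R S :=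
  .of_equiv (P.equivAwayAdjoinRoot.trans ((IsLocalization.algEquiv
    (Submonoid.powers (AdjoinRoot.mk P.f P.g)) (Localization.Away _) S).restrictScalars R))

noncomputable def kummer {R : Type*} [CommRing R] (a : R) {n : ℕ} (hn : n ≠ 0)
    (hinv : IsUnit (n : R)) : StandardEtalePair R where
  f := X ^ n - C a
  monic_f := monic_X_pow_sub_C a hn
  g := X
  cond := ⟨C ↑hinv.unit⁻¹, 0, n - 1, by
    rw [derivative_sub, derivative_C, sub_zero, derivative_X_pow, mul_zero, add_zero,
      mul_right_comm, ← C_mul, hinv.mul_val_inv, C_1, one_mul]⟩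

end StandardEtalePair

theorem kummerAlg_finite (R : Type*) [CommRing R] (a : R) {n : ℕ} (hn : n ≠ 0) :
    Module.Finite R (kummerAlg R a n) :=
  (AdjoinRoot.powerBasis' (monic_X_pow_sub_C a hn)).finite

theorem kummerAlg_etale_of_isLocalizationAway (R : Type*) [CommRing R] (a : R) {n : ℕ}
    (hn : n ≠ 0) (hinv : IsUnit (n : R)) (Sa : Type*) [CommRing Sa] [Algebra R Sa]
    [Algebra (kummerAlg R a n) Sa] [IsScalarTower R (kummerAlg R a n) Sa]
    [IsLocalization.Away (kummerAlgMk R a n a) Sa] :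
    Algebra.Etale R Sa := by
  let P := StandardEtalePair.kummer a hn hinv
  -- `AdjoinRoot P.f` is `kummerAlg R a n` up to unfolding; restate the instances in its terms.
  let _ : Algebra (AdjoinRoot P.f) Sa := ‹Algebra (kummerAlg R a n) Sa›
  have : IsScalarTower R (AdjoinRoot P.f) Sa := ‹IsScalarTower R (kummerAlg R a n) Sa›
  have hpow : AdjoinRoot.mk P.f P.g ^ n = AdjoinRoot.of P.f a :=
    AdjoinRoot.root_X_pow_sub_C_pow a n
  have : IsLocalization.Away (AdjoinRoot.mk P.f P.g ^ n) Sa :=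
    hpow ▸ (‹IsLocalization.Away (kummerAlgMk R a n a) Sa› :
      IsLocalization.Away (AdjoinRoot.of P.f a) Sa)
  have : IsLocalization.Away (AdjoinRoot.mk P.f P.g) Sa := .of_pow hn
  exact P.etale_of_isLocalizationAway Sa

/-- Let `R` be a commutative ring, `a ∈ R`, and `n ≥ 1` with `n` invertible in `R`.
Then `S = R[T]/(T^n - a)` is étale over `R` after inverting `a`: the induced map
`R[1/a] → S[1/a]` is finite and étale (equivalently, finite, flat, and unramified). -/
theorem kummer_algebra_etale_away_from_branch_divisor
    (R : Type*) [CommRing R] (a : R) (n : ℕ) (hn : 1 ≤ n) (hinv : IsUnit (n : R))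
    (Ra : Type v) [CommRing Ra] [Algebra R Ra] [IsLocalization.Away a Ra]
    (Sa : Type v) [CommRing Sa] [Algebra (kummerAlg R a n) Sa]
    [IsLocalization.Away (kummerAlgMk R a n a) Sa] :
    letI f : Ra →+* Sa := IsLocalization.Away.map Ra Sa (kummerAlgMk R a n) a
    letI : Algebra Ra Sa := f.toAlgebra
    Module.Finite Ra Sa ∧ Algebra.Etale Ra Sa := by
  let f : Ra →+* Sa := IsLocalization.Away.map Ra Sa (kummerAlgMk R a n) a
  let _ : Algebra Ra Sa := f.toAlgebra
  have hn₀ : n ≠ 0 := Nat.one_le_iff_ne_zero.mp hn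
  let _ : Algebra R Sa := ((algebraMap (kummerAlg R a n) Sa).comp (kummerAlgMk R a n)).toAlgebra
  have : IsScalarTower R (kummerAlg R a n) Sa :=
    IsScalarTower.of_algebraMap_eq' (R := R) (S := kummerAlg R a n) (A := Sa) rfl
  have : IsScalarTower R Ra Sa := .of_algebraMap_eq fun x ↦
    (IsLocalization.map_eq (S := Ra) (Q := Sa) _ x : f (algebraMap R Ra x) = _).symm
  have : Algebra.Etale R Ra := .of_isLocalizationAway a
  have : Algebra.Etale R Sa := kummerAlg_etale_of_isLocalizationAway R a hn₀ hinv Sa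
  have : Module.Finite R (kummerAlg R a n) := kummerAlg_finite R a hn₀
  have : IsLocalization
      (Algebra.algebraMapSubmonoid (kummerAlg R a n) (Submonoid.powers a)) Sa := by
    rw [Algebra.algebraMapSubmonoid, Submonoid.map_powers]
    exact ‹IsLocalization.Away (kummerAlgMk R a n a) Sa›
  exact ⟨.of_isLocalization R (kummerAlg R a n) (Submonoid.powers a), .of_restrictScalars R Ra Sa⟩
end

section
/- Let A = ℤ[u, v, w, x, y, z], set Δ₂ = wx − uz and Δ₃ = uy − vx, let q ≥ 1, and let l, m, n ≥ 0 with l + m + n = q − 1. Then u^l · v^m · w^n · Δ₂^{q−1} · Δ₃^{q−1} ≡ (−1)^{n + (q−1−m)} · C(q−1, q−1−n) · C(q−1, m) · u^{q−1} v^{q−1} w^{q−1} · x^{l+q−1} · y^m · z^n modulo the ideal (u^q, v^q, w^q). -/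
/-!
Expanding both binomials writes `u^l v^m w^n Δ₂^p Δ₃^p` (with `p = q - 1`) as a sum of terms
`u^i v^j w^k · r` with `i + j + k = 3p`. Such a term lies in `(u^q, v^q, w^q)` unless
`i, j, k ≤ p`, which forces `i = j = k = p` and singles out one term of the double sum.
-/

open MvPolynomial Finset

theorem pow_mul_pow_mul_pow_mul_mem_span_pow {R : Type*} [CommSemiring R] {u v w : R}
    {q i j k : ℕ} (h : q ≤ i ∨ q ≤ j ∨ q ≤ k) (r : R) :
    u ^ i * v ^ j * w ^ k * r ∈ Ideal.span {u ^ q, v ^ q, w ^ q} := by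
  set I := Ideal.span {u ^ q, v ^ q, w ^ q}
  refine I.mul_mem_right r ?_
  rcases h with h | h | h
  · refine I.mul_mem_right _ (I.mul_mem_right _ (I.pow_mem_of_pow_mem ?_ h))
    exact Ideal.subset_span (by simp)
  · refine I.mul_mem_right _ (I.mul_mem_left _ (I.pow_mem_of_pow_mem ?_ h))
    exact Ideal.subset_span (by simp)
  · refine I.mul_mem_left _ (I.pow_mem_of_pow_mem ?_ h)
    exact Ideal.subset_span (by simp)

section

variable {R : Type*} [CommRing R]

theorem mul_sub_pow_mul_sub_pow_eq_sum (u v w x y z : R) (l m n p : ℕ) :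
    u ^ l * v ^ m * w ^ n * (w * x - u * z) ^ p * (u * y - v * x) ^ p =
      ∑ ac ∈ range (p + 1) ×ˢ range (p + 1),
        u ^ (l + (p - ac.1) + ac.2) * v ^ (m + (p - ac.2)) * w ^ (n + ac.1) *
          ((-1) ^ (ac.1 + p + (ac.2 + p)) * p.choose ac.1 * p.choose ac.2 *
            x ^ (ac.1 + (p - ac.2)) * y ^ ac.2 * z ^ (p - ac.1)) := by
  rw [sum_product, mul_assoc _ (_ ^ p), sub_pow, sub_pow, sum_mul_sum, mul_sum]
  refine sum_congr rfl fun a _ => ?_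
  rw [mul_sum]
  refine sum_congr rfl fun c _ => ?_
  ring

theorem mul_sub_pow_mul_sub_pow_sub_mem_span_pow (u v w x y z : R) {l m n p : ℕ}
    (hlmn : l + m + n = p) :
    u ^ l * v ^ m * w ^ n * (w * x - u * z) ^ p * (u * y - v * x) ^ p -
        (-1) ^ (n + (p - m)) * (p.choose (p - n) : R) * (p.choose m : R) *
          u ^ p * v ^ p * w ^ p * x ^ (l + p) * y ^ m * z ^ n ∈
      Ideal.span {u ^ (p + 1), v ^ (p + 1), w ^ (p + 1)} := by
  rw [← Ideal.Quotient.eq, mul_sub_pow_mul_sub_pow_eq_sum, map_sum, sum_eq_single (p - n, m)]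
  · have hsign : (-1 : R) ^ (p - n + p + (m + p)) = (-1) ^ (n + (p - m)) := by
      rw [neg_one_pow_eq_pow_mod_two, neg_one_pow_eq_pow_mod_two (n + (p - m))]
      congr 1
      omega
    rw [hsign, show p - (p - n) = n by omega, show l + n + m = p by omega,
      show m + (p - m) = p by omega, show n + (p - n) = p by omega,
      show p - n + (p - m) = l + p by omega]
    congr 1
    ring
  · rintro ⟨a, c⟩ hac hne
    rw [Ideal.Quotient.eq_zero_iff_mem]
    refine pow_mul_pow_mul_pow_mul_mem_span_pow ?_ _
    simp only [mem_product, mem_range, ne_eq, Prod.mk.injEq] at hac hne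
    omega
  · simp only [mem_product, mem_range]
    omega

end

/-- In `ℤ[u,v,w,x,y,z]` with `Δ₂ = wx - uz` and `Δ₃ = uy - vx`, if `l + m + n = q - 1`
then `u^l v^m w^n Δ₂^{q-1} Δ₃^{q-1} ≡
(-1)^{n+(q-1-m)} C(q-1, q-1-n) C(q-1, m) u^{q-1} v^{q-1} w^{q-1} x^{l+q-1} y^m z^n`
modulo `(u^q, v^q, w^q)`. -/
theorem segre_cone_congruence
    (q l m n : ℕ) (hq : 1 ≤ q) (hlmn : l + m + n = q - 1) :
    letI u : MvPolynomial (Fin 6) ℤ := X 0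
    letI v : MvPolynomial (Fin 6) ℤ := X 1
    letI w : MvPolynomial (Fin 6) ℤ := X 2
    letI x : MvPolynomial (Fin 6) ℤ := X 3
    letI y : MvPolynomial (Fin 6) ℤ := X 4
    letI z : MvPolynomial (Fin 6) ℤ := X 5
    u ^ l * v ^ m * w ^ n * (w * x - u * z) ^ (q - 1) * (u * y - v * x) ^ (q - 1) -
        (-1) ^ (n + (q - 1 - m)) * ((q - 1).choose (q - 1 - n) : MvPolynomial (Fin 6) ℤ) *
          ((q - 1).choose m : MvPolynomial (Fin 6) ℤ) *
          u ^ (q - 1) * v ^ (q - 1) * w ^ (q - 1) * x ^ (l + (q - 1)) * y ^ m * z ^ n ∈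
      Ideal.span {u ^ q, v ^ q, w ^ q} := by
  obtain ⟨p, rfl⟩ := Nat.exists_eq_add_of_le' hq
  exact mul_sub_pow_mul_sub_pow_sub_mem_span_pow _ _ _ _ _ _ hlmn
end
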